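/- arXiv:1110.6398 — 3 statements merged into one kernel-verified Lean document; each statement's English description precedes it below -/
import Mathlib

section
/- Let b = p_1^{α_1}⋯p_k^{α_k} ≥ 2 be the prime factorization of b, and let D be a set of exactly b nonnegative integers satisfying the Kenyon condition with respect to b. Then for each j ∈ {1,…,k} and each ℓ with 0 ≤ ℓ ≤ α_j−1 there exists a unique integer a_{j,ℓ} ≥ 1 with a_{j,ℓ} ≡ ℓ (mod α_j) such that Φ_{p_j^{a_{j,ℓ}}}(X) divides P_D(X); moreover the prime-power spectrum of D is exactly S_D = {p_j^{a_{j,ℓ}} : 1 ≤ j ≤ k, 0 ≤ ℓ ≤ α_j−1}, where for each j the set {a_{j,0},…,a_{j,α_j−1}} is a complete residue system modulo α_j. -/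
open Polynomial

/-- The mask polynomial `P_A(X) = ∑_{a ∈ A} X^a ∈ ℤ[X]` of a finite set of naturals. -/
noncomputable def mask (A : Finset ℕ) : Polynomial ℤ := ∑ a ∈ A, X ^ a

/-- The Kenyon condition with respect to `b`. -/
def Kenyon (b : ℕ) (D : Finset ℕ) : Prop :=
  ∀ m : ℕ, 1 ≤ m → ∃ k : ℕ, 1 ≤ k ∧
    Polynomial.aeval (Complex.exp (2 * Real.pi * Complex.I * (m : ℂ) / (b : ℂ) ^ k)) (mask D) = 0

/-!
If `Φ_{p^a} ∣ P_D` for every `a` in a finite set `T` of positive exponents, the product of these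
pairwise coprime irreducible factors divides `P_D`; as `Φ_{p^a}(1) = p`, evaluating at `1` gives
`p ^ #T ∣ #D = b`. Hence there are at most `α_p` such exponents, and `q ∣ b` whenever `q ^ a ∈ S_D`.
Conversely, for `b = p ^ α * c` with `p ∤ c`, the Kenyon zero for `m = p ^ (α - s) * c ^ N` with
`N` large is a primitive root of unity of order `p ^ a`, `a ≡ s (mod α)`, so every residue class
mod `α` contains an exponent; with at most `α` exponents, each class contains exactly one.
-/

open Finset

theorem cyclotomic_dvd_of_isPrimitiveRoot {K : Type*} [Field K] [CharZero K] {f : ℤ[X]} {n : ℕ}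
    {z : K} (hz : IsPrimitiveRoot z n) (hn : 0 < n) (hf : aeval z f = 0) :
    cyclotomic n ℤ ∣ f := by
  rw [cyclotomic_eq_minpoly hz hn]
  exact minpoly.isIntegrallyClosed_dvd (hz.isIntegral hn) hf

/-- `exp (2πi m / N)` is a primitive `n`-th root of unity when `u / n` is `m / N` in lowest terms. -/
theorem cyclotomic_dvd_of_aeval_exp_eq_zero {f : ℤ[X]} {m N u n : ℕ} (hN : N ≠ 0) (hn : n ≠ 0)
    (hcop : u.Coprime n) (hmn : m * n = u * N)
    (hf : aeval (Complex.exp (2 * Real.pi * Complex.I * m / N)) f = 0) :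
    cyclotomic n ℤ ∣ f := by
  have hfrac : 2 * Real.pi * Complex.I * m / N = 2 * Real.pi * Complex.I * (u / n) := by
    rw [mul_div_assoc]
    congr 1
    rw [div_eq_div_iff (Nat.cast_ne_zero.2 hN) (Nat.cast_ne_zero.2 hn)]
    exact_mod_cast hmn
  rw [hfrac] at hf
  exact cyclotomic_dvd_of_isPrimitiveRoot (Complex.isPrimitiveRoot_exp_of_coprime u n hn hcop)
    (Nat.pos_of_ne_zero hn) hf

theorem isRelPrime_cyclotomic {n m : ℕ} (hn : 0 < n) (hm : 0 < m) (hnm : n ≠ m) :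
    IsRelPrime (cyclotomic n ℤ) (cyclotomic m ℤ) := by
  refine (cyclotomic.irreducible hn).isRelPrime_iff_not_dvd.2 fun hdvd => hnm ?_
  refine cyclotomic_injective (eq_of_monic_of_associated (cyclotomic.monic n ℤ)
    (cyclotomic.monic m ℤ) ?_)
  exact (cyclotomic.irreducible hn).associated_of_dvd (cyclotomic.irreducible hm) hdvd

theorem le_totient_prime_pow {p : ℕ} (hp : p.Prime) (a : ℕ) : a ≤ Nat.totient (p ^ a) := by
  cases a with
  | zero => exact Nat.zero_le _
  | succ a =>
    rw [Nat.totient_prime_pow_succ hp]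
    calc a + 1 ≤ p ^ a := Nat.lt_pow_self hp.one_lt
      _ ≤ p ^ a * (p - 1) := Nat.le_mul_of_pos_right _ (Nat.sub_pos_of_lt hp.one_lt)

theorem le_natDegree_of_cyclotomic_prime_pow_mul_dvd {f : ℤ[X]} (hf : f ≠ 0) {p a v : ℕ}
    (hp : p.Prime) (hv : 0 < v) (h : cyclotomic (p ^ a * v) ℤ ∣ f) : a ≤ f.natDegree :=
  calc a ≤ Nat.totient (p ^ a) := le_totient_prime_pow hp a
    _ ≤ Nat.totient (p ^ a * v) := Nat.le_of_dvd (Nat.totient_pos.2 (by positivity [hp.pos]))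
      (Nat.totient_dvd_of_dvd (dvd_mul_right _ _))
    _ = (cyclotomic (p ^ a * v) ℤ).natDegree := (natDegree_cyclotomic _ _).symm
    _ ≤ f.natDegree := natDegree_le_of_dvd h hf

/-- `p ^ a ∈ S_D` iff `a ∈ primePowSpectrum (mask D) p`. -/
def primePowSpectrum (f : ℤ[X]) (p : ℕ) : Set ℕ := {a | 1 ≤ a ∧ cyclotomic (p ^ a) ℤ ∣ f}

theorem pow_card_dvd_eval_one {f : ℤ[X]} {p : ℕ} (hp : p.Prime) {T : Finset ℕ}
    (hT : ↑T ⊆ primePowSpectrum f p) : (p : ℤ) ^ #T ∣ f.eval 1 := by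
  have hprod : ∏ a ∈ T, cyclotomic (p ^ a) ℤ ∣ f := by
    refine Finset.prod_dvd_of_isRelPrime (fun a _ a' _ hne => ?_) fun a ha => (hT ha).2
    exact isRelPrime_cyclotomic (pow_pos hp.pos a) (pow_pos hp.pos a')
      fun h => hne (Nat.pow_right_injective hp.two_le h)
  have heval : ∀ a ∈ T, (cyclotomic (p ^ a) ℤ).eval 1 = p := by
    intro a ha
    obtain ⟨a, rfl⟩ := Nat.exists_eq_add_of_le' (hT ha).1
    have := Fact.mk hp
    exact eval_one_cyclotomic_prime_pow a
  simpa only [eval_prod, Finset.prod_congr rfl heval, prod_const] using eval_dvd (x := 1) hprod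

theorem mask_eval_one (D : Finset ℕ) : (mask D).eval 1 = #D := by
  simp [mask, eval_finsetSum]

theorem mask_ne_zero {D : Finset ℕ} (hD : D.Nonempty) : mask D ≠ 0 := fun h => by
  simpa [h, mask_eval_one, hD.ne_empty] using (mask_eval_one D).symm

theorem card_le_factorization_card {D : Finset ℕ} (hD : D.Nonempty) {p : ℕ} (hp : p.Prime)
    {T : Finset ℕ} (hT : ↑T ⊆ primePowSpectrum (mask D) p) : #T ≤ (#D).factorization p := by
  have h := pow_card_dvd_eval_one hp hT
  rw [mask_eval_one] at h
  exact (hp.pow_dvd_iff_le_factorization hD.card_ne_zero).1 (by exact_mod_cast h)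

/-- With `b = p ^ α * c`, `p ∤ c` and `N = deg P_D`, the Kenyon zero for `m = p ^ (α - s) * c ^ N`
at level `k = j + 1` is `exp (2πi u / n)` in lowest terms, where `u = c ^ (N - k)` and
`n = p ^ (α * j + s) * c ^ (k - N)` (one of the two truncated differences vanishes).
`deg Φ_n ≤ N` forces `k ≤ N`, so `n = p ^ (α * j + s)`. -/
theorem Kenyon.exists_mul_add_mem_primePowSpectrum {b : ℕ} {D : Finset ℕ} (hK : Kenyon b D)
    (hD : D.Nonempty) {p s : ℕ} (hp : p.Prime) (hs1 : 1 ≤ s) (hs : s ≤ b.factorization p) :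
    ∃ j, b.factorization p * j + s ∈ primePowSpectrum (mask D) p := by
  set α := b.factorization p
  have hb : b ≠ 0 := by rintro rfl; simp [α] at hs; omega
  set c := b / p ^ α
  have hc : 0 < c := Nat.ordCompl_pos p hb
  have hcp : c.Coprime p := (Nat.coprime_ordCompl hp hb).symm
  have hbc : p ^ α * c = b := Nat.ordProj_mul_ordCompl_eq_self b p
  set N := (mask D).natDegree
  obtain ⟨k, hk, hroot⟩ := hK (p ^ (α - s) * c ^ N) (Nat.mul_pos (pow_pos hp.pos _) (pow_pos hc _))
  obtain ⟨j, rfl⟩ := Nat.exists_eq_add_of_le' hk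
  set a := α * j + s
  set n := p ^ a * c ^ (j + 1 - N)
  have hn : 0 < n := Nat.mul_pos (pow_pos hp.pos _) (pow_pos hc _)
  have hcop : (c ^ (N - (j + 1))).Coprime n := by
    refine Nat.Coprime.mul_right (hcp.pow _ _) ?_
    rcases le_total (j + 1) N with h | h <;> simp [Nat.sub_eq_zero_of_le h]
  have hlowest : p ^ (α - s) * c ^ N * n = c ^ (N - (j + 1)) * b ^ (j + 1) := by
    rw [← hbc, mul_pow, ← pow_mul]
    calc _ = p ^ (α - s + a) * c ^ (N + (j + 1 - N)) := by ring
      _ = p ^ (α * (j + 1)) * c ^ (N - (j + 1) + (j + 1)) := by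
        rw [mul_add_one]; congr 2 <;> omega
      _ = _ := by ring
  have hdvd : cyclotomic n ℤ ∣ mask D := by
    refine cyclotomic_dvd_of_aeval_exp_eq_zero (pow_ne_zero _ hb) hn.ne' hcop hlowest ?_
    simpa using hroot
  have hjN : j + 1 ≤ N := by
    by_contra! h
    have := le_natDegree_of_cyclotomic_prime_pow_mul_dvd (mask_ne_zero hD) hp (pow_pos hc _) hdvd
    have : j ≤ α * j := Nat.le_mul_of_pos_left j (by omega)
    omega
  refine ⟨j, by omega, ?_⟩
  simpa [n, Nat.sub_eq_zero_of_le hjN] using hdvd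

theorem Kenyon.exists_mem_primePowSpectrum_mod_eq {b : ℕ} {D : Finset ℕ} (hK : Kenyon b D)
    (hD : D.Nonempty) {p ℓ : ℕ} (hp : p.Prime) (hℓ : ℓ < b.factorization p) :
    ∃ a ∈ primePowSpectrum (mask D) p, a % b.factorization p = ℓ := by
  rcases Nat.eq_zero_or_pos ℓ with rfl | hℓ0
  · obtain ⟨j, hj⟩ := hK.exists_mul_add_mem_primePowSpectrum hD hp hℓ le_rfl
    exact ⟨_, hj, by simp [← mul_add_one]⟩
  · obtain ⟨j, hj⟩ := hK.exists_mul_add_mem_primePowSpectrum hD hp hℓ0 hℓ.le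
    exact ⟨_, hj, by simp [Nat.mod_eq_of_lt hℓ]⟩

theorem eq_of_mod_eq_of_forall_card_le {S : Set ℕ} {α : ℕ}
    (hcard : ∀ T : Finset ℕ, ↑T ⊆ S → #T ≤ α) (hsurj : ∀ ℓ < α, ∃ a ∈ S, a % α = ℓ)
    {a a' : ℕ} (ha : a ∈ S) (ha' : a' ∈ S) (h : a % α = a' % α) : a = a' := by
  have hα : 0 < α := hcard {a} (by simpa using ha)
  have hfin : S.Finite := by
    by_contra hinf
    obtain ⟨T, hTS, hT⟩ := Set.Infinite.exists_subset_card_eq hinf (α + 1)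
    exact absurd (hcard T hTS) (by omega)
  refine Finset.inj_on_of_surj_on_of_card_le (t := range α) (fun x _ => x % α)
    (fun x _ => mem_range.2 (Nat.mod_lt x hα)) (fun ℓ hℓ => ?_)
    (by simpa using hcard _ (by simp)) (hfin.mem_toFinset.2 ha) (hfin.mem_toFinset.2 ha') h
  obtain ⟨x, hx, hxℓ⟩ := hsurj ℓ (mem_range.1 hℓ)
  exact ⟨x, hfin.mem_toFinset.2 hx, hxℓ⟩

/-- For each prime `p ∣ b` with multiplicity `α_p = b.factorization p` and each residue
`ℓ < α_p`, there is a unique `a ≥ 1` with `a ≡ ℓ (mod α_p)` and `Φ_{p^a} ∣ P_D`; moreover the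
prime-power spectrum of `D` consists exactly of such prime powers `p^a` with `p ∣ b`. -/
theorem stmt1 (b : ℕ) (hb : 2 ≤ b) (D : Finset ℕ) (hcard : D.card = b) (hK : Kenyon b D) :
    (∀ p : ℕ, p.Prime → p ∣ b → ∀ ℓ : ℕ, ℓ < b.factorization p →
      ∃! a : ℕ, 1 ≤ a ∧ a % b.factorization p = ℓ ∧ cyclotomic (p ^ a) ℤ ∣ mask D) ∧
    (∀ q a : ℕ, q.Prime → 1 ≤ a → cyclotomic (q ^ a) ℤ ∣ mask D → q ∣ b) := by
  have hD : D.Nonempty := card_pos.1 (by omega)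
  refine ⟨fun p hp _ ℓ hℓ => ?_, fun q a hq ha hdvd => ?_⟩
  · have hsurj : ∀ ℓ < b.factorization p, ∃ a ∈ primePowSpectrum (mask D) p,
        a % b.factorization p = ℓ := fun ℓ hℓ => hK.exists_mem_primePowSpectrum_mod_eq hD hp hℓ
    obtain ⟨a, ⟨ha1, hdvd⟩, haℓ⟩ := hsurj ℓ hℓ
    refine ⟨a, ⟨ha1, haℓ, hdvd⟩, fun a' ⟨ha'1, ha'ℓ, ha'dvd⟩ => ?_⟩
    refine eq_of_mod_eq_of_forall_card_le (fun T hT => ?_) hsurj ⟨ha'1, ha'dvd⟩ ⟨ha1, hdvd⟩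
      (ha'ℓ.trans haℓ.symm)
    simpa [hcard] using card_le_factorization_card hD hp hT
  · have h := pow_card_dvd_eval_one hq (T := {a}) (by simpa using ⟨ha, hdvd⟩)
    rw [mask_eval_one, hcard, card_singleton, pow_one] at h
    exact_mod_cast h
end

section
/- Let b ≥ 2 and let D be a finite set of nonnegative integers satisfying condition (P1) with respect to b. Then D satisfies the Kenyon condition with respect to b; moreover, for any choice of witnesses j(d) ≥ 0 (one for each divisor d > 1 of b) such that Φ_d(X^{b^{j(d)}}) divides P_D(X), the product ∏_{d ∣ b, d>1} Φ_d(X^{b^{j(d)}}) divides P_D(X) in ℤ[X], i.e., P_D(X) = (∏_{d ∣ b, d>1} Φ_d(X^{b^{j(d)}}))·Q(X) for some Q ∈ ℤ[X]. -/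
open Polynomial

/-- Condition (P1): for every divisor `d > 1` of `b` there is `j ≥ 0` with
`Φ_d(X^{b^j}) ∣ P_D(X)`. -/
def CondP1 (b : ℕ) (D : Finset ℕ) : Prop :=
  ∀ d : ℕ, d ∣ b → 1 < d → ∃ j : ℕ, (cyclotomic d ℤ).comp (X ^ b ^ j) ∣ mask D

/-! If `m = b^s m'` with `b ∤ m'`, then `ζ = exp(2πi m / b^(s+1+j))` satisfies
`ζ^(b^j) = exp(2πi m'/b)`, a primitive `d`-th root of unity where `d > 1` is the reduced
denominator of `m'/b`, a divisor of `b`. Taking `j` from (P1) for this `d` makes `ζ` a root of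
`Φ_d(X^{b^j})`, hence of `P_D`.

The factors `Φ_d(X^{b^{j(d)}})` are monic and pairwise without common complex root: at a common
root `z`, `z^{b^j}` would be a primitive `d`-th and `z^{b^i}` a primitive `e`-th root of unity, and
for `j < i` the latter is a power of `(z^{b^j})^b = 1`. So they are pairwise coprime over `ℚ`,
their product divides `P_D` over `ℚ`, and by monicity also over `ℤ`. -/

open Complex in
lemma exp_two_pi_I_div_pow_add_pow (m b k j : ℕ) (hb : b ≠ 0) :
    exp (2 * Real.pi * I * m / (b : ℂ) ^ (k + j)) ^ b ^ j =
      exp (2 * Real.pi * I * (((m : ℚ) / b ^ k : ℚ) : ℂ)) := by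
  rw [← exp_nat_mul]
  congr 1
  push_cast
  field_simp
  ring

lemma exists_den_div_pow_dvd_and_one_lt {b m : ℕ} (hb : 2 ≤ b) (hm : m ≠ 0) :
    ∃ k, 1 ≤ k ∧ ((m : ℚ) / b ^ k).den ∣ b ∧ 1 < ((m : ℚ) / b ^ k).den := by
  obtain ⟨s, m', hm', rfl⟩ := Nat.exists_eq_pow_mul_and_not_dvd hm b (by omega)
  have hb0 : (b : ℚ) ≠ 0 := by exact_mod_cast (by omega : b ≠ 0)
  have hq : ((b ^ s * m' : ℕ) : ℚ) / b ^ (s + 1) = (m' : ℚ) / b := by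
    push_cast
    field_simp
    ring
  refine ⟨s + 1, by omega, ?_⟩
  rw [hq]
  refine ⟨?_, ?_⟩
  · have hdvd := Rat.den_dvd m' b
    rw [Rat.divInt_eq_div] at hdvd
    exact_mod_cast hdvd
  · have hne := (Rat.den_div_natCast_eq_one_iff m' b (by omega)).not.mpr hm'
    have hpos := Rat.den_pos ((m' : ℚ) / b)
    omega

lemma aeval_cyclotomic_comp_X_pow_eq_zero_iff {K : Type*} [CommRing K] [IsDomain K] [CharZero K]
    {d : ℕ} (hd : d ≠ 0) (n : ℕ) (z : K) :
    aeval z ((cyclotomic d ℤ).comp (X ^ n)) = 0 ↔ IsPrimitiveRoot (z ^ n) d := by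
  have : NeZero (d : K) := ⟨Nat.cast_ne_zero.mpr hd⟩
  rw [aeval_comp, map_pow, aeval_X, aeval_def, eval₂_eq_eval_map, map_cyclotomic]
  exact isRoot_cyclotomic_iff

theorem CondP1.kenyon {b : ℕ} {D : Finset ℕ} (hb : 2 ≤ b) (h : CondP1 b D) : Kenyon b D := by
  intro m hm
  obtain ⟨k, hk, hdb, hd⟩ := exists_den_div_pow_dvd_and_one_lt hb (m := m) (by omega)
  obtain ⟨j, Q, hQ⟩ := h _ hdb hd
  refine ⟨k + j, by omega, ?_⟩
  have hroot : aeval (Complex.exp (2 * Real.pi * Complex.I * m / (b : ℂ) ^ (k + j)))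
      ((cyclotomic ((m : ℚ) / b ^ k).den ℤ).comp (X ^ b ^ j)) = 0 := by
    rw [aeval_cyclotomic_comp_X_pow_eq_zero_iff (by omega),
      exp_two_pi_I_div_pow_add_pow m b k j (by omega)]
    exact Complex.isPrimitiveRoot_exp_rat _
  rw [hQ, map_mul, hroot, zero_mul]

lemma IsPrimitiveRoot.pow_pow_eq_one_of_lt {M : Type*} [CommMonoid M] {z : M} {b d j i : ℕ}
    (hz : IsPrimitiveRoot (z ^ b ^ j) d) (hdb : d ∣ b) (hji : j < i) : z ^ b ^ i = 1 := by
  obtain ⟨t, ht⟩ := pow_dvd_pow b (Nat.succ_le_of_lt hji)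
  rw [ht, pow_mul, pow_succ, pow_mul, (hz.pow_eq_one_iff_dvd b).mpr hdb, one_pow]

lemma cyclotomic_comp_X_pow_not_common_root {K : Type*} [CommRing K] [IsDomain K] [CharZero K]
    {b d e j i : ℕ} (hdb : d ∣ b) (heb : e ∣ b) (hd : 1 < d) (he : 1 < e) (hde : d ≠ e)
    (z : K) :
    aeval z ((cyclotomic d ℤ).comp (X ^ b ^ j)) ≠ 0 ∨
      aeval z ((cyclotomic e ℤ).comp (X ^ b ^ i)) ≠ 0 := by
  rw [ne_eq, ne_eq, aeval_cyclotomic_comp_X_pow_eq_zero_iff (by omega),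
    aeval_cyclotomic_comp_X_pow_eq_zero_iff (by omega), ← not_and_or]
  rintro ⟨hzd, hze⟩
  rcases lt_trichotomy j i with hji | rfl | hij
  · rw [hzd.pow_pow_eq_one_of_lt hdb hji] at hze
    exact he.ne' (hze.unique IsPrimitiveRoot.one)
  · exact hde (hzd.unique hze)
  · rw [hze.pow_pow_eq_one_of_lt heb hij] at hzd
    exact hd.ne' (hzd.unique IsPrimitiveRoot.one)

lemma prod_dvd_of_pairwise_not_common_root {ι : Type*} {s : Finset ι} {f : ι → ℤ[X]} {p : ℤ[X]}
    (hmonic : ∀ i ∈ s, (f i).Monic) (hdvd : ∀ i ∈ s, f i ∣ p)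
    (hroot : (s : Set ι).Pairwise fun i j => ∀ z : ℂ, aeval z (f i) ≠ 0 ∨ aeval z (f j) ≠ 0) :
    ∏ i ∈ s, f i ∣ p := by
  rw [← map_dvd_map (Int.castRingHom ℚ) Int.cast_injective (monic_prod_of_monic _ _ hmonic),
    Polynomial.map_prod]
  refine Finset.prod_dvd_of_coprime (fun i hi j hj hij => ?_)
    fun i hi => Polynomial.map_dvd _ (hdvd i hi)
  rw [Function.onFun, isCoprime_iff_aeval_ne_zero_of_isAlgClosed ℚ ℂ]
  simpa only [← algebraMap_int_eq, aeval_map_algebraMap] using hroot hi hj hij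

theorem stmt3_general (b : ℕ) (hb : 2 ≤ b) (D : Finset ℕ)
    (J : ℕ → ℕ) (hJ : ∀ d : ℕ, d ∣ b → 1 < d → (cyclotomic d ℤ).comp (X ^ b ^ J d) ∣ mask D) :
    Kenyon b D ∧
      (∏ d ∈ b.divisors.filter (fun d => 1 < d), (cyclotomic d ℤ).comp (X ^ b ^ J d)) ∣ mask D := by
  have hmem : ∀ {d}, d ∈ b.divisors.filter (fun d => 1 < d) ↔ d ∣ b ∧ 1 < d := by
    simp only [Finset.mem_filter, Nat.mem_divisors]
    omega
  refine ⟨CondP1.kenyon hb fun d hdb hd => ⟨J d, hJ d hdb hd⟩, ?_⟩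
  apply prod_dvd_of_pairwise_not_common_root
  · intro d _
    exact (cyclotomic.monic d ℤ).comp (monic_X_pow _) (by simp only [natDegree_X_pow]; positivity)
  · intro d hd
    exact hJ d (hmem.1 hd).1 (hmem.1 hd).2
  · intro d hd e he hde
    exact cyclotomic_comp_X_pow_not_common_root (hmem.1 hd).1 (hmem.1 he).1 (hmem.1 hd).2
      (hmem.1 he).2 hde

theorem stmt3 (b : ℕ) (hb : 2 ≤ b) (D : Finset ℕ) (hP1 : CondP1 b D)
    (J : ℕ → ℕ) (hJ : ∀ d : ℕ, d ∣ b → 1 < d → (cyclotomic d ℤ).comp (X ^ b ^ J d) ∣ mask D) :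
    Kenyon b D ∧
      (∏ d ∈ b.divisors.filter (fun d => 1 < d), (cyclotomic d ℤ).comp (X ^ b ^ J d)) ∣ mask D :=
  stmt3_general b hb D J hJ
end

section
/- Let b ≥ 2. (a) If B is a symmetric blocking of the Protasov tree of b, then N = {τ(k,m) : (k,m) ∈ B} is a blocking of the Φ-tree of b. (b) Conversely, if N is a blocking of the Φ-tree of b, then B = {(k,m) : (k,m) a vertex of the Protasov tree with τ(k,m) ∈ N} is a symmetric blocking of the Protasov tree of b. -/
open Polynomial

/-- `(k, m)` is a vertex of the Protasov tree of `b`. -/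
def IsVertex (b : ℕ) (v : ℕ × ℕ) : Prop :=
  1 ≤ v.1 ∧ 1 ≤ v.2 ∧ v.2 < b ^ v.1 ∧ ¬ b ∣ v.2

/-- `τ(k, m) = b^k / gcd(m, b^k)`. -/
def tau (b : ℕ) (v : ℕ × ℕ) : ℕ := b ^ v.1 / Nat.gcd v.2 (b ^ v.1)

/-- An infinite path in the Protasov tree of `b` (indices `k ≥ 1`). -/
def IsPath (b : ℕ) (m : ℕ → ℕ) : Prop :=
  (1 ≤ m 1 ∧ m 1 ≤ b - 1) ∧
    ∀ k : ℕ, 1 ≤ k → 1 ≤ m (k + 1) ∧ m (k + 1) < b ^ (k + 1) ∧ m (k + 1) ≡ m k [MOD b ^ k]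

/-- A blocking of the Protasov tree: a finite set of vertices met by every infinite path
exactly once. -/
def IsBlocking (b : ℕ) (B : Set (ℕ × ℕ)) : Prop :=
  B.Finite ∧ (∀ v ∈ B, IsVertex b v) ∧
    ∀ m : ℕ → ℕ, IsPath b m → ∃! k : ℕ, 1 ≤ k ∧ (k, m k) ∈ B

/-- A blocking is symmetric when it contains every vertex with the same `τ`-value as one of
its elements. -/
def IsSymmetric (b : ℕ) (B : Set (ℕ × ℕ)) : Prop :=
  ∀ v ∈ B, ∀ w : ℕ × ℕ, IsVertex b w → tau b w = tau b v → w ∈ B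

/-- An infinite path in the Φ-tree of `b` (indices `k ≥ 1`). -/
def IsPhiPath (b : ℕ) (d : ℕ → ℕ) : Prop :=
  1 < d 1 ∧ d 1 ∣ b ∧ ∀ k : ℕ, 1 ≤ k → 1 < d (k + 1) ∧
    cyclotomic (d (k + 1)) ℤ ∣ (cyclotomic (d k) ℤ).comp (X ^ b)

/-- A blocking of the Φ-tree: a finite set of integers `> 1`, each on some infinite path of
the Φ-tree, met by every infinite path exactly once. -/
def IsPhiBlocking (b : ℕ) (N : Finset ℕ) : Prop :=
  (∀ e ∈ N, 1 < e ∧ ∃ d : ℕ → ℕ, IsPhiPath b d ∧ ∃ k : ℕ, 1 ≤ k ∧ d k = e) ∧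
    ∀ d : ℕ → ℕ, IsPhiPath b d → ∃! k : ℕ, 1 ≤ k ∧ d k ∈ N

/-!
`τ(k, m)` is the additive order of `m` modulo `b ^ k`, i.e. the order of the root of unity
`ζ ^ m` for `ζ` a primitive `b ^ k`-th root of unity. Passing from a vertex to its parent
corresponds to raising this root to the `b`-th power, and `Φ_e ∣ Φ_d(X ^ b)` holds exactly when
`d = e / gcd(e, b)`, so `τ` maps paths of the Protasov tree to paths of the Φ-tree. Conversely
every path of the Φ-tree lifts along `τ` to a path of the Protasov tree: this is a Chinese
remainder argument, lifting a unit modulo `d` to a unit modulo a multiple of `d`. Finally the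
level of a vertex is the least `k` with `τ ∣ b ^ k`, so only finitely many vertices share a
value of `τ`. A symmetric blocking is the `τ`-preimage of its `τ`-image, and both parts follow.
-/

theorem IsPrimitiveRoot.pow_div_gcd {M : Type*} [CommMonoid M] {ζ : M} {e : ℕ}
    (hζ : IsPrimitiveRoot ζ e) {b : ℕ} (hb : b ≠ 0) :
    IsPrimitiveRoot (ζ ^ b) (e / e.gcd b) := by
  simpa [orderOf_pow' ζ hb, ← hζ.eq_orderOf] using IsPrimitiveRoot.orderOf (ζ ^ b)

/-- Both sides say that `ζ ^ b` is a primitive `d`-th root of unity for a primitive `e`-th root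
of unity `ζ`. -/
theorem Polynomial.cyclotomic_dvd_comp_X_pow_iff {b d e : ℕ} (hb : b ≠ 0) (he : 0 < e) :
    cyclotomic e ℤ ∣ (cyclotomic d ℤ).comp (X ^ b) ↔ d = e / e.gcd b := by
  have hζ := Complex.isPrimitiveRoot_exp e he.ne'
  have hζb := hζ.pow_div_gcd hb
  rw [← map_dvd_map (Int.castRingHom ℚ) (RingHom.injective_int _) (cyclotomic.monic e ℤ),
    map_cyclotomic, cyclotomic_eq_minpoly_rat hζ he, minpoly.dvd_iff, Polynomial.map_comp,
    map_cyclotomic, Polynomial.map_pow, map_X, aeval_comp, map_pow, aeval_X, aeval_def,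
    ← eval_map, map_cyclotomic, ← IsRoot.def]
  rcases Nat.eq_zero_or_pos d with rfl | hd
  · have : 0 < e / e.gcd b := Nat.div_pos (Nat.gcd_le_left b he) (Nat.gcd_pos_of_pos_left b he)
    simpa using this.ne
  · rw [isRoot_cyclotomic_iff_charZero hd]
    exact ⟨fun h => h.unique hζb, fun h => h ▸ hζb⟩

theorem Nat.exists_coprime_add_mul {x n : ℕ} (hx : x.Coprime n) {m : ℕ} (hm : m ≠ 0) :
    ∃ k, (x + k * n).Coprime m := by
  rcases eq_or_ne n 0 with rfl | hn
  · exact ⟨0, by simp [(Nat.coprime_zero_right x).1 hx]⟩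
  have : NeZero (n * m) := ⟨mul_ne_zero hn hm⟩
  obtain ⟨V, hV⟩ := ZMod.unitsMap_surjective (dvd_mul_right n m) (ZMod.unitOfCoprime x hx)
  set v := (V : ZMod (n * m)).val
  have hvx : x ≡ v [MOD n] := by
    rw [← ZMod.natCast_eq_natCast_iff, ZMod.natCast_val,
      ← ZMod.unitsMap_val (dvd_mul_right n m), hV, ZMod.coe_unitOfCoprime]
  -- shift `v` by a multiple of `n * m` so that it is at least `x`
  have hxw : x ≡ v + n * x * m [MOD n] :=
    hvx.trans (Nat.ModEq.symm (by simp [Nat.ModEq, mul_assoc, Nat.add_mul_mod_self_left]))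
  have hle : x ≤ v + n * x * m := calc
    x = 1 * x * 1 := by ring
    _ ≤ n * x * m := by gcongr <;> omega
    _ ≤ v + n * x * m := le_add_self
  obtain ⟨k, hk⟩ := (Nat.modEq_iff_dvd' hle).1 hxw
  refine ⟨k, ?_⟩
  rw [show x + k * n = v + n * x * m by rw [mul_comm, ← hk]; omega,
    Nat.coprime_add_mul_right_left]
  exact (ZMod.val_coe_unit_coprime V).coprime_mul_left_right

theorem Nat.exists_gcd_add_mul_eq {u d q s : ℕ} (hud : u.Coprime d) (hqd : q.Coprime d)
    (hq : q ≠ 0) (hs : s ≠ 0) : ∃ t, (u + t * d).gcd (q * s) = q := by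
  have : NeZero q := ⟨hq⟩
  -- make `u + t₀ * d = q * v` divisible by `q`, then move `v` by multiples of `d` until it is
  -- coprime to `s`
  set t₀ := (-(u : ZMod q) * (d : ZMod q)⁻¹).val
  obtain ⟨v, hv⟩ : q ∣ u + t₀ * d := by
    rw [← ZMod.natCast_eq_zero_iff]
    push_cast [t₀, ZMod.natCast_val, ZMod.cast_id]
    linear_combination (-(u : ZMod q)) * ZMod.coe_mul_inv_eq_one d hqd.symm
  have hvd : v.Coprime d := by
    refine Nat.Coprime.coprime_mul_left (k := q) ?_
    rwa [← hv, Nat.coprime_add_mul_right_left]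
  obtain ⟨j, hj⟩ := Nat.exists_coprime_add_mul hvd hs
  refine ⟨t₀ + q * j, ?_⟩
  have : u + (t₀ + q * j) * d = q * (v + j * d) := by rw [add_mul, ← add_assoc, hv]; ring
  rw [this, Nat.gcd_mul_left, hj, mul_one]

/-- The arithmetic behind lifting a vertex `(k, m)` of `τ`-value `N / gcd(m, N)` (with `N = b^k`)
to a child of prescribed `τ`-value `e`. -/
theorem Nat.exists_div_gcd_add_mul_eq {N b m e : ℕ} (hN : N ≠ 0) (hb : b ≠ 0)
    (h : e / e.gcd b = N / m.gcd N) : ∃ t, N * b / (m + t * N).gcd (N * b) = e := by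
  obtain ⟨u, d, hud, hm, hNd⟩ := Nat.exists_coprime m N
  set g := m.gcd N
  have hg : 0 < g := Nat.gcd_pos_of_pos_right m (Nat.pos_of_ne_zero hN)
  obtain ⟨q, hq⟩ := Nat.gcd_dvd_right e b
  set s := e.gcd b
  have hs : 0 < s := Nat.gcd_pos_of_pos_right e (Nat.pos_of_ne_zero hb)
  have he : e = d * s := by
    rw [← Nat.div_mul_cancel (Nat.gcd_dvd_left e b), h, hNd, Nat.mul_div_cancel _ hg]
  have hdq : d.Coprime q := Nat.eq_of_mul_eq_mul_left hs <| by
    rw [mul_one, ← Nat.gcd_mul_left, ← hq, mul_comm, ← he]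
  have hq0 : q ≠ 0 := right_ne_zero_of_mul (hq ▸ hb)
  obtain ⟨t, ht⟩ := Nat.exists_gcd_add_mul_eq hud hdq.symm hq0 hs.ne'
  have hgcd : (m + t * N).gcd (N * b) = g * q := by
    have hcop : d.Coprime (u + t * d) := by rwa [Nat.coprime_comm, Nat.coprime_add_mul_right_left]
    rw [hm, hNd, hq, show u * g + t * (d * g) = g * (u + t * d) by ring,
      show d * g * (s * q) = g * (d * (q * s)) by ring, Nat.gcd_mul_left,
      hcop.gcd_mul_left_cancel_right, ht]
  refine ⟨t, ?_⟩
  rw [hgcd, he, hNd, hq]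
  exact Nat.div_eq_of_eq_mul_left (Nat.mul_pos hg (Nat.pos_of_ne_zero hq0)) (by ring)

section Tau

variable {b : ℕ}

theorem tau_eq_addOrderOf (hb : 0 < b) (v : ℕ × ℕ) :
    tau b v = addOrderOf (v.2 : ZMod (b ^ v.1)) := by
  rw [ZMod.addOrderOf_coe _ (pow_pos hb _).ne', Nat.gcd_comm, tau]

theorem tau_congr (hb : 0 < b) {k m m' : ℕ} (h : m ≡ m' [MOD b ^ k]) :
    tau b (k, m) = tau b (k, m') := by
  simp only [tau_eq_addOrderOf hb, (ZMod.natCast_eq_natCast_iff _ _ _).2 h]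

theorem tau_succ_div_gcd (hb : 0 < b) (k m : ℕ) :
    tau b (k + 1, m) / (tau b (k + 1, m)).gcd b = tau b (k, m) := by
  rw [tau_eq_addOrderOf hb, ← addOrderOf_nsmul' _ hb.ne', nsmul_eq_mul, ← Nat.cast_mul,
    ZMod.addOrderOf_coe _ (pow_pos hb _).ne', pow_succ', Nat.gcd_mul_left,
    Nat.mul_div_mul_left _ _ hb, Nat.gcd_comm, tau]

theorem tau_dvd_pow_iff (hb : 0 < b) {v : ℕ × ℕ} (hv : ¬ b ∣ v.2) (j : ℕ) :
    tau b v ∣ b ^ j ↔ v.1 ≤ j := by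
  rw [tau_eq_addOrderOf hb, addOrderOf_dvd_iff_nsmul_eq_zero, nsmul_eq_mul, ← Nat.cast_mul,
    ZMod.natCast_eq_zero_iff]
  refine ⟨fun h => ?_, fun h => dvd_mul_of_dvd_left (pow_dvd_pow b h) _⟩
  by_contra! hj
  rw [← Nat.add_sub_of_le hj.le, pow_add, Nat.mul_dvd_mul_iff_left (pow_pos hb j)] at h
  exact hv ((dvd_pow_self b (by omega)).trans h)

theorem one_lt_tau (hb : 0 < b) {v : ℕ × ℕ} (hv : ¬ b ∣ v.2) (hk : 1 ≤ v.1) :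
    1 < tau b v := by
  have hne : tau b v ≠ 0 := fun h => (pow_pos hb v.1).ne' <|
    zero_dvd_iff.1 (h ▸ (tau_dvd_pow_iff hb hv v.1).2 le_rfl)
  have hne' : tau b v ≠ 1 := fun h => by
    have := (tau_dvd_pow_iff hb hv 0).1 (by simp [h])
    omega
  omega

theorem IsVertex.fst_eq_of_tau_eq (hb : 0 < b) {v w : ℕ × ℕ} (hv : IsVertex b v)
    (hw : IsVertex b w) (h : tau b v = tau b w) : v.1 = w.1 :=
  le_antisymm ((tau_dvd_pow_iff hb hv.2.2.2 _).1 (h ▸ (tau_dvd_pow_iff hb hw.2.2.2 _).2 le_rfl))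
    ((tau_dvd_pow_iff hb hw.2.2.2 _).1 (h ▸ (tau_dvd_pow_iff hb hv.2.2.2 _).2 le_rfl))

theorem finite_setOf_isVertex_tau_eq (hb : 0 < b) (e : ℕ) :
    {v | IsVertex b v ∧ tau b v = e}.Finite := by
  rcases Set.eq_empty_or_nonempty {v | IsVertex b v ∧ tau b v = e} with h | ⟨w, hw, rfl⟩
  · simp [h]
  refine ((Set.finite_singleton w.1).prod (Set.finite_Iio (b ^ w.1))).subset ?_
  rintro v ⟨hv, hvw⟩
  have h1 := hv.fst_eq_of_tau_eq hb hw hvw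
  exact ⟨h1, h1 ▸ hv.2.2.1⟩

end Tau

theorem exists_seq_of_forall_exists_succ {α : Type*} {P : ℕ → α → Prop}
    {R : ℕ → α → α → Prop} {a : α} (ha : P 0 a)
    (step : ∀ n x, P n x → ∃ y, P (n + 1) y ∧ R n x y) :
    ∃ f : ℕ → α, ∀ n, P n (f n) ∧ R n (f n) (f (n + 1)) := by
  have : Nonempty α := ⟨a⟩
  choose! g hg using step
  let f : ℕ → α := fun n => Nat.rec a g n
  have hf : ∀ n, P n (f n) := fun n => by
    induction n with
    | zero => exact ha
    | succ n ih => exact (hg n _ ih).1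
  exact ⟨f, fun n => ⟨hf n, (hg n _ (hf n)).2⟩⟩

section Paths

variable {b : ℕ}

theorem not_dvd_of_modEq_pow {k m m' : ℕ} (hk : k ≠ 0) (h : m' ≡ m [MOD b ^ k])
    (hm : ¬ b ∣ m) : ¬ b ∣ m' := by
  rwa [(Nat.ModEq.of_dvd (dvd_pow_self b hk) h).dvd_iff dvd_rfl]

theorem isVertex_mod_pow (hb : 0 < b) {k m : ℕ} (hk : 1 ≤ k) (hm : ¬ b ∣ m) :
    IsVertex b (k, m % b ^ k) := by
  have hmod : ¬ b ∣ m % b ^ k := not_dvd_of_modEq_pow (by omega) (Nat.mod_modEq m _) hm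
  refine ⟨hk, Nat.one_le_iff_ne_zero.2 ?_, Nat.mod_lt _ (pow_pos hb k), hmod⟩
  exact fun h : m % b ^ k = 0 => hmod (h ▸ dvd_zero b)

theorem isPath_iff {m : ℕ → ℕ} :
    IsPath b m ↔ ∀ k, 1 ≤ k → IsVertex b (k, m k) ∧ m (k + 1) ≡ m k [MOD b ^ k] := by
  refine ⟨fun hm k hk => ⟨?_, (hm.2 k hk).2.2⟩, fun h => ⟨?_, fun k hk => ?_⟩⟩
  · obtain ⟨⟨h1, h2⟩, hstep⟩ := hm
    have hnd : ¬ b ∣ m k := by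
      induction k, hk using Nat.le_induction with
      | base => exact fun h => by have := Nat.le_of_dvd h1 h; omega
      | succ k hk ih => exact not_dvd_of_modEq_pow (by omega) (hstep k hk).2.2 ih
    obtain rfl | ⟨j, hj, rfl⟩ : k = 1 ∨ ∃ j, 1 ≤ j ∧ k = j + 1 :=
      (eq_or_lt_of_le hk).imp Eq.symm fun hk => ⟨k - 1, by omega, by omega⟩
    · exact ⟨le_rfl, h1, by rw [pow_one]; omega, hnd⟩
    · exact ⟨by omega, (hstep j hj).1, (hstep j hj).2.1, hnd⟩
  · obtain ⟨-, h1, h2, -⟩ := (h 1 le_rfl).1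
    rw [pow_one] at h2
    omega
  · obtain ⟨-, h1, h2, -⟩ := (h (k + 1) (by omega)).1
    exact ⟨h1, h2, (h k hk).2⟩

theorem isPath_mod_pow (hb : 0 < b) {m : ℕ} (hm : ¬ b ∣ m) : IsPath b (fun k => m % b ^ k) :=
  isPath_iff.2 fun k hk => ⟨isVertex_mod_pow hb hk hm,
    ((Nat.mod_modEq m _).of_dvd (pow_dvd_pow b k.le_succ)).trans (Nat.mod_modEq m _).symm⟩

theorem IsPath.isPhiPath_tau (hb : 0 < b) {m : ℕ → ℕ} (hm : IsPath b m) :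
    IsPhiPath b (fun k => tau b (k, m k)) := by
  have hv := isPath_iff.1 hm
  have hτ : ∀ k, 1 ≤ k → 1 < tau b (k, m k) := fun k hk => one_lt_tau hb (hv k hk).1.2.2.2 hk
  refine ⟨hτ 1 le_rfl, by simpa using (tau_dvd_pow_iff hb (hv 1 le_rfl).1.2.2.2 1).2 le_rfl,
    fun k hk => ⟨hτ (k + 1) (by omega), ?_⟩⟩
  rw [cyclotomic_dvd_comp_X_pow_iff hb.ne' (by linarith [hτ (k + 1) (by omega)]),
    tau_succ_div_gcd hb, tau_congr hb (hv k hk).2]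

theorem IsVertex.exists_succ_tau_eq (hb : 0 < b) {k m e : ℕ} (hv : IsVertex b (k, m))
    (h : e / e.gcd b = tau b (k, m)) :
    ∃ m', IsVertex b (k + 1, m') ∧ m' ≡ m [MOD b ^ k] ∧ tau b (k + 1, m') = e := by
  obtain ⟨t, ht⟩ := Nat.exists_div_gcd_add_mul_eq (pow_pos hb k).ne' hb.ne' h
  have hmod : m + t * b ^ k ≡ m [MOD b ^ k] := Nat.add_mul_mod_self_right m t _
  refine ⟨(m + t * b ^ k) % b ^ (k + 1),
    isVertex_mod_pow hb (by omega) (not_dvd_of_modEq_pow (by have := hv.1; omega) hmod hv.2.2.2),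
    ((Nat.mod_modEq _ _).of_dvd (pow_dvd_pow b k.le_succ)).trans hmod, ?_⟩
  rw [tau_congr hb (Nat.mod_modEq _ _), ← ht, tau, pow_succ]

theorem IsPhiPath.exists_isPath_tau_eq (hb : 0 < b) {d : ℕ → ℕ} (hd : IsPhiPath b d) :
    ∃ m, IsPath b m ∧ ∀ k, 1 ≤ k → tau b (k, m k) = d k := by
  have hchild : ∀ k, 1 ≤ k → d (k + 1) / (d (k + 1)).gcd b = d k := fun k hk =>
    ((cyclotomic_dvd_comp_X_pow_iff hb.ne' (by linarith [(hd.2.2 k hk).1])).1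
      (hd.2.2 k hk).2).symm
  have hd1 : 0 < b / d 1 := Nat.div_pos (Nat.le_of_dvd hb hd.2.1) (by linarith [hd.1])
  have hroot : IsVertex b (1, b / d 1) ∧ tau b (1, b / d 1) = d 1 := by
    have hlt : b / d 1 < b := Nat.div_lt_self hb hd.1
    refine ⟨⟨le_rfl, hd1, by rwa [pow_one], Nat.not_dvd_of_pos_of_lt hd1 hlt⟩, ?_⟩
    rw [tau, pow_one, Nat.gcd_eq_left (Nat.div_dvd_of_dvd hd.2.1), Nat.div_div_self hd.2.1 hb.ne']
  obtain ⟨f, hf⟩ := exists_seq_of_forall_exists_succ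
    (P := fun n x => IsVertex b (n + 1, x) ∧ tau b (n + 1, x) = d (n + 1))
    (R := fun n x y => y ≡ x [MOD b ^ (n + 1)]) hroot fun n x ⟨hx, hxd⟩ => by
      obtain ⟨y, hy, hyx, hyd⟩ :=
        hx.exists_succ_tau_eq hb (by rw [hxd, hchild (n + 1) (by omega)])
      exact ⟨y, ⟨hy, hyd⟩, hyx⟩
  refine ⟨fun k => f (k - 1), isPath_iff.2 fun k hk => ?_, fun k hk => ?_⟩ <;>
    obtain ⟨n, rfl⟩ : ∃ n, k = n + 1 := ⟨k - 1, by omega⟩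
  · simpa using ⟨(hf n).1.1, (hf n).2⟩
  · simpa using (hf n).1.2

end Paths

section Blocking

variable {b : ℕ}

theorem IsBlocking.isPhiBlocking_image_tau (hb : 0 < b) {B : Finset (ℕ × ℕ)}
    (hB : IsBlocking b ↑B) (hsymm : IsSymmetric b ↑B) : IsPhiBlocking b (B.image (tau b)) := by
  obtain ⟨-, hvert, hblock⟩ := hB
  refine ⟨fun e he => ?_, fun d hd => ?_⟩
  · obtain ⟨v, hvB, rfl⟩ := Finset.mem_image.1 he
    have hv := hvert v hvB
    refine ⟨one_lt_tau hb hv.2.2.2 hv.1, _, (isPath_mod_pow hb hv.2.2.2).isPhiPath_tau hb, v.1,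
      hv.1, ?_⟩
    simp only [Nat.mod_eq_of_lt hv.2.2.1]
  · obtain ⟨m, hm, hmd⟩ := hd.exists_isPath_tau_eq hb
    obtain ⟨k, ⟨hk, hkB⟩, huniq⟩ := hblock m hm
    refine ⟨k, ⟨hk, hmd k hk ▸ Finset.mem_image_of_mem _ hkB⟩,
      fun j ⟨hj, hjB⟩ => huniq j ⟨hj, ?_⟩⟩
    obtain ⟨w, hwB, hw⟩ := Finset.mem_image.1 hjB
    exact hsymm w hwB _ (isPath_iff.1 hm j hj).1 (by rw [hmd j hj, hw])

theorem IsPhiBlocking.isBlocking_setOf_tau_mem (hb : 0 < b) {N : Finset ℕ}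
    (hN : IsPhiBlocking b N) : IsBlocking b {v | IsVertex b v ∧ tau b v ∈ N} := by
  refine ⟨?_, fun v hv => hv.1, fun m hm => ?_⟩
  · exact (N.finite_toSet.biUnion fun e _ => finite_setOf_isVertex_tau_eq hb e).subset
      fun v hv => Set.mem_biUnion hv.2 ⟨hv.1, rfl⟩
  · refine (existsUnique_congr fun k => ?_).1 (hN.2 _ (hm.isPhiPath_tau hb))
    exact ⟨fun ⟨hk, h⟩ => ⟨hk, (isPath_iff.1 hm k hk).1, h⟩,
      fun ⟨hk, _, h⟩ => ⟨hk, h⟩⟩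

end Blocking

/-- (a) The `τ`-image of a symmetric blocking of the Protasov tree is a blocking of the
Φ-tree; (b) the `τ`-preimage of a blocking of the Φ-tree is a symmetric blocking of the
Protasov tree. -/
theorem stmt14 (b : ℕ) (hb : 2 ≤ b) :
    (∀ B : Finset (ℕ × ℕ), IsBlocking b ↑B → IsSymmetric b ↑B →
      IsPhiBlocking b (B.image (tau b))) ∧
    (∀ N : Finset ℕ, IsPhiBlocking b N →
      IsBlocking b {v : ℕ × ℕ | IsVertex b v ∧ tau b v ∈ N} ∧
      IsSymmetric b {v : ℕ × ℕ | IsVertex b v ∧ tau b v ∈ N}) := by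
  have hb₀ : 0 < b := by omega
  exact ⟨fun B hB hsymm => hB.isPhiBlocking_image_tau hb₀ hsymm,
    fun N hN => ⟨hN.isBlocking_setOf_tau_mem hb₀, fun v hv w hw h => ⟨hw, h ▸ hv.2⟩⟩⟩
end
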